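/- For every integer s ≥ 1 there exist constants C_s > 0 and A > 0 such that for every integer n ≥ 1 and every finite Blaschke product B with n zeros a_1, …, a_n in the open unit disk 𝔻, there exists a function φ, holomorphic and zero-free on an open neighborhood of the closed unit disk, satisfying: φ(0) = 1; |φ(z)| ≤ A for all z with |z| = 1; and |(Bφ)^{(s)}(z)| ≤ C_s·n^s for all z with |z| = 1, where (Bφ)^{(s)} denotes the s-th complex derivative of B·φ. -/

import Mathlib

open Metric

lemma key_poly (ρ R p q x y : ℝ) (hρ : 0 ≤ ρ) (hρ1 : ρ ≤ 1) (hR : 1 ≤ R)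
    (hρR : ρ * R ^ 2 ≤ 1) (hp : 0 ≤ p) (hq : 0 ≤ q) (hq1 : q ≤ 1) (hpR : p ≤ R ^ 2)
    (hpq : p * q = x ^ 2 + y ^ 2) :
    (1 + ρ * R) ^ 2 * (p - 2 * x + q) ≤ (1 + R) ^ 2 * ((1 - ρ * x) ^ 2 + (ρ * y) ^ 2) := by
  have hR0 : (0:ℝ) < R := lt_of_lt_of_le one_pos hR
  have h4 : R ^ 2 * (p * q) = R ^ 2 * (x ^ 2 + y ^ 2) := by rw [hpq]
  have hT0 : 0 ≤ p + q * R ^ 2 := by positivity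
  have hsq : (2 * R * x) ^ 2 ≤ (p + q * R ^ 2) ^ 2 := by
    nlinarith [sq_nonneg (p - q * R ^ 2), sq_nonneg (R * y), h4]
  have h1 : 0 ≤ p + q * R ^ 2 + 2 * R * x := by
    nlinarith [hsq, hT0, sq_nonneg (p + q * R ^ 2 + 2 * R * x)]
  have hT1 : 0 ≤ (1 - ρ) * (1 - ρ * R ^ 2) * R * (p + q * R ^ 2 + 2 * R * x) := by
    have h5 : 0 ≤ (1 - ρ) * (1 - ρ * R ^ 2) * R := by
      have : 0 ≤ 1 - ρ := by linarith
      have : 0 ≤ 1 - ρ * R ^ 2 := by linarith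
      positivity
    exact mul_nonneg h5 h1
  have hT2 : 0 ≤ (R ^ 2 - p) * (1 - q) * (1 + R) ^ 2 := by
    have h5 : 0 ≤ R ^ 2 - p := by linarith
    have h6 : 0 ≤ 1 - q := by linarith
    positivity
  have hT3 : 0 ≤ p * (1 - q) * (1 + R) * (1 + ρ * R) * (1 - ρ * R ^ 2) := by
    have h6 : 0 ≤ 1 - q := by linarith
    have h7 : 0 ≤ 1 - ρ * R ^ 2 := by linarith
    positivity
  have hT4 : 0 ≤ (R ^ 2 - p) * q * R * (1 - ρ) * (1 + R) * (1 + ρ * R) := by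
    have h5 : 0 ≤ R ^ 2 - p := by linarith
    have h6 : 0 ≤ 1 - ρ := by linarith
    positivity
  have key : R ^ 2 * ((1 + R) ^ 2 * ((1 - ρ * x) ^ 2 + (ρ * y) ^ 2)
        - (1 + ρ * R) ^ 2 * (p - 2 * x + q))
      = (1 - ρ) * (1 - ρ * R ^ 2) * R * (p + q * R ^ 2 + 2 * R * x)
        + (R ^ 2 - p) * (1 - q) * (1 + R) ^ 2
        + p * (1 - q) * (1 + R) * (1 + ρ * R) * (1 - ρ * R ^ 2)
        + (R ^ 2 - p) * q * R * (1 - ρ) * (1 + R) * (1 + ρ * R)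
        + (1 + R) ^ 2 * ρ ^ 2 * (R ^ 2 * (x ^ 2 + y ^ 2) - R ^ 2 * (p * q)) := by
    ring
  have h6 : 0 ≤ R ^ 2 * ((1 + R) ^ 2 * ((1 - ρ * x) ^ 2 + (ρ * y) ^ 2)
      - (1 + ρ * R) ^ 2 * (p - 2 * x + q)) := by
    rw [key, h4]; linarith
  have hR2 : (0:ℝ) < R ^ 2 := by positivity
  have hD := (mul_nonneg_iff_of_pos_left hR2).mp h6
  linarith

lemma key_ineq (ρ R : ℝ) (hρ : 0 ≤ ρ) (hR : 1 ≤ R) (hρR : ρ * R ^ 2 ≤ 1)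
    (a w : ℂ) (ha : ‖a‖ ≤ 1) (hw : ‖w‖ ≤ R) :
    (1 + ρ * R) * ‖w - a‖ ≤ (1 + R) * ‖1 - (ρ : ℂ) * (starRingEnd ℂ) a * w‖ := by
  have hR0 : (0:ℝ) < R := lt_of_lt_of_le one_pos hR
  have hρ1 : ρ ≤ 1 := by nlinarith [mul_le_mul_of_nonneg_left (by nlinarith : (1:ℝ) ≤ R ^ 2) hρ]
  apply le_of_pow_le_pow_left₀ two_ne_zero (by positivity)
  rw [mul_pow, mul_pow]
  have e1 : ‖w - a‖ ^ 2 = (w.re ^ 2 + w.im ^ 2) - 2 * (a.re * w.re + a.im * w.im)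
      + (a.re ^ 2 + a.im ^ 2) := by
    rw [Complex.sq_norm, Complex.normSq_apply, Complex.sub_re,
      Complex.sub_im]
    ring
  have e2 : ‖1 - (ρ : ℂ) * (starRingEnd ℂ) a * w‖ ^ 2 =
      (1 - ρ * (a.re * w.re + a.im * w.im)) ^ 2 + (ρ * (a.re * w.im - a.im * w.re)) ^ 2 := by
    rw [Complex.sq_norm, Complex.normSq_apply]
    simp [Complex.sub_re, Complex.sub_im, Complex.mul_re, Complex.mul_im]
    ring
  have ha2 : a.re ^ 2 + a.im ^ 2 ≤ 1 := by
    have h1 : ‖a‖ ^ 2 ≤ 1 := pow_le_one₀ (norm_nonneg a) ha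
    rw [Complex.sq_norm, Complex.normSq_apply] at h1
    nlinarith [h1]
  have hw2 : w.re ^ 2 + w.im ^ 2 ≤ R ^ 2 := by
    have h1 : ‖w‖ ^ 2 ≤ R ^ 2 := pow_le_pow_left₀ (norm_nonneg w) hw 2
    rw [Complex.sq_norm, Complex.normSq_apply] at h1
    nlinarith [h1]
  rw [e1, e2]
  exact key_poly ρ R _ _ _ _ hρ hρ1 hR hρR (by positivity) (by positivity) ha2 hw2 (by ring)

lemma norm_one_sub_conj_mul (a z : ℂ) (hz : ‖z‖ = 1) :
    ‖1 - (starRingEnd ℂ) a * z‖ = ‖z - a‖ := by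
  have h1 : z * (starRingEnd ℂ) z = 1 := by
    rw [Complex.mul_conj]
    norm_cast
    rw [Complex.normSq_eq_norm_sq, hz]; norm_num
  have h2 : z - a = z * (starRingEnd ℂ) (1 - (starRingEnd ℂ) a * z) := by
    rw [map_sub, map_one, map_mul, Complex.conj_conj, mul_sub, mul_one]
    have : z * (a * (starRingEnd ℂ) z) = a * (z * (starRingEnd ℂ) z) := by ring
    rw [this, h1, mul_one]
  rw [h2, norm_mul, hz, one_mul, RCLike.norm_conj]

lemma cauchy_bound {f : ℂ → ℂ} {z : ℂ} {r M : ℝ} (hr : 0 < r)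
    (hf : DifferentiableOn ℂ f (closedBall z r))
    (hM : ∀ w ∈ closedBall z r, ‖f w‖ ≤ M) (s : ℕ) :
    ‖iteratedDeriv s f z‖ ≤ s.factorial * M / r ^ s := by
  have hM0 : 0 ≤ M := le_trans (norm_nonneg _) (hM z (mem_closedBall_self hr.le))
  lift r to NNReal using hr.le with R
  have hR0 : 0 < R := by exact_mod_cast hr
  have h := hf.hasFPowerSeriesOnBall hR0
  have heq : iteratedDeriv s f z = iteratedFDeriv ℂ s f z (fun _ => 1) :=
    iteratedDeriv_eq_iteratedFDeriv
  have hsm := h.factorial_smul (1 : ℂ) s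
  rw [heq, ← hsm]
  rw [← Nat.cast_smul_eq_nsmul ℂ, norm_smul, Complex.norm_natCast]
  have hb1 : ‖cauchyPowerSeries f z R s (fun _ => 1)‖ ≤ ‖cauchyPowerSeries f z R s‖ := by
    have := (cauchyPowerSeries f z R s).le_opNorm (fun _ => 1)
    simpa using this
  have hb2 : ‖cauchyPowerSeries f z R s‖ ≤
      ((2 * Real.pi)⁻¹ * ∫ θ : ℝ in (0)..2 * Real.pi, ‖f (circleMap z R θ)‖) * |(R:ℝ)|⁻¹ ^ s :=
    norm_cauchyPowerSeries_le f z R s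
  have hcont : Continuous fun θ : ℝ => ‖f (circleMap z R θ)‖ := by
    apply Continuous.norm
    apply hf.continuousOn.comp_continuous (continuous_circleMap z R)
    intro θ
    exact sphere_subset_closedBall (circleMap_mem_sphere z hr.le θ)
  have hint : (∫ θ : ℝ in (0)..2 * Real.pi, ‖f (circleMap z R θ)‖) ≤ 2 * Real.pi * M := by
    have := intervalIntegral.integral_mono_on (a := 0) (b := 2 * Real.pi)
      Real.two_pi_pos.le (hcont.intervalIntegrable _ _) (intervalIntegrable_const (c := M) (μ := MeasureTheory.volume))
      (fun θ _ => hM _ (sphere_subset_closedBall (circleMap_mem_sphere z hr.le θ)))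
    simpa using this
  have hpi : (0:ℝ) < 2 * Real.pi := Real.two_pi_pos
  have hstep : ‖cauchyPowerSeries f z R s‖ ≤ M * ((R:ℝ) ^ s)⁻¹ := by
    refine hb2.trans ?_
    have h5 : (2 * Real.pi)⁻¹ * ∫ θ : ℝ in (0)..2 * Real.pi, ‖f (circleMap z R θ)‖ ≤ M := by
      rw [inv_mul_le_iff₀ hpi]
      linarith [hint]
    rw [abs_of_nonneg (R.coe_nonneg), inv_pow]
    apply mul_le_mul_of_nonneg_right h5 (by positivity)
  calc (s.factorial : ℝ) * ‖cauchyPowerSeries f z R s (fun _ => 1)‖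
      ≤ (s.factorial : ℝ) * (M * ((R:ℝ) ^ s)⁻¹) := by
        apply mul_le_mul_of_nonneg_left (hb1.trans hstep) (by positivity)
    _ = s.factorial * M / (R:ℝ) ^ s := by ring

set_option maxHeartbeats 1000000 in
/-- For every integer `s ≥ 1` there are constants `C_s, A > 0` such that for every finite
Blaschke product `B` with `n` zeros in the open unit disk there is a function `φ`,
holomorphic and zero-free on a neighborhood of the closed disk, with `φ(0) = 1`,
`|φ| ≤ A` on the circle and `|(Bφ)^{(s)}| ≤ C_s n^s` on the circle. -/
theorem videnskii_shirokov_higher (s : ℕ) (hs : 1 ≤ s) :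
    ∃ C > (0 : ℝ), ∃ A > (0 : ℝ), ∀ n : ℕ, 1 ≤ n → ∀ a : Fin n → ℂ,
      (∀ k, ‖a k‖ < 1) →
      ∃ (φ : ℂ → ℂ) (U : Set ℂ), IsOpen U ∧ closedBall (0 : ℂ) 1 ⊆ U ∧
        DifferentiableOn ℂ φ U ∧ (∀ z ∈ U, φ z ≠ 0) ∧ φ 0 = 1 ∧
        (∀ z : ℂ, ‖z‖ = 1 → ‖φ z‖ ≤ A) ∧
        (∀ z : ℂ, ‖z‖ = 1 →
          ‖iteratedDeriv s (fun w : ℂ =>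
              (∏ k, (w - a k) / (1 - (starRingEnd ℂ) (a k) * w)) * φ w) z‖ ≤ C * n ^ s) := by
  refine ⟨(s.factorial : ℝ) * 2 ^ s * Real.exp 2, by positivity, Real.exp 1, Real.exp_pos 1, ?_⟩
  intro n hn a ha
  have hn1 : (1:ℝ) ≤ (n:ℝ) := by exact_mod_cast hn
  have hn0 : (0:ℝ) < (n:ℝ) := by linarith
  set t : ℝ := 1 / (n:ℝ) with ht_def
  have ht0 : 0 < t := by positivity
  have ht1 : t ≤ 1 := by rw [ht_def]; exact div_le_one_of_le₀ hn1 hn0.le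
  set ρ : ℝ := 1 - t with hρ_def
  set R : ℝ := 1 + t / 2 with hR_def
  have hρ0 : 0 ≤ ρ := by simp only [hρ_def]; linarith
  have hρ1 : ρ ≤ 1 := by simp only [hρ_def]; linarith
  have hR1 : 1 ≤ R := by simp only [hR_def]; linarith
  have hR2 : R ≤ 2 := by simp only [hR_def]; linarith
  have hρR2 : ρ * R ^ 2 ≤ 1 := by
    simp only [hρ_def, hR_def]
    nlinarith [sq_nonneg t, mul_nonneg (mul_nonneg ht0.le ht0.le) ht0.le]
  have hρR1 : ρ * R ≤ 1 := by
    simp only [hρ_def, hR_def]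
    nlinarith [sq_nonneg t, mul_nonneg ht0.le ht0.le]
  -- the denominator is nonzero on the closed ball of radius R
  have hden : ∀ w : ℂ, ‖w‖ ≤ R → ∀ k, (1 : ℂ) - (ρ:ℂ) * (starRingEnd ℂ) (a k) * w ≠ 0 := by
    intro w hw k hzero
    have h1 : ‖(ρ:ℂ) * (starRingEnd ℂ) (a k) * w‖ < 1 := by
      rw [norm_mul, norm_mul, Complex.norm_real, Real.norm_eq_abs, abs_of_nonneg hρ0,
        RCLike.norm_conj]
      nlinarith [ha k, norm_nonneg w, norm_nonneg (a k),
        mul_le_mul_of_nonneg_left hw (mul_nonneg hρ0 (norm_nonneg (a k))),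
        mul_nonneg (norm_nonneg (a k)) (sub_nonneg.mpr hρR1)]
    have h2 : (ρ:ℂ) * (starRingEnd ℂ) (a k) * w = 1 := (sub_eq_zero.mp hzero.symm.symm).symm
    rw [h2, norm_one] at h1
    exact lt_irrefl 1 h1
  have hnum : ∀ w : ℂ, ‖w‖ ≤ 1 → ∀ k, (1 : ℂ) - (starRingEnd ℂ) (a k) * w ≠ 0 := by
    intro w hw k hzero
    have h1 : ‖(starRingEnd ℂ) (a k) * w‖ < 1 := by
      rw [norm_mul, RCLike.norm_conj]
      nlinarith [ha k, norm_nonneg w, norm_nonneg (a k),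
        mul_le_mul_of_nonneg_left hw (norm_nonneg (a k))]
    have h2 : (starRingEnd ℂ) (a k) * w = 1 := (sub_eq_zero.mp hzero.symm.symm).symm
    rw [h2, norm_one] at h1
    exact lt_irrefl 1 h1
  refine ⟨fun w => ∏ k, (1 - (starRingEnd ℂ) (a k) * w) / (1 - (ρ:ℂ) * (starRingEnd ℂ) (a k) * w),
    ball (0:ℂ) R ∩ {w : ℂ | ∀ k, (1 : ℂ) - (starRingEnd ℂ) (a k) * w ≠ 0}, ?_, ?_, ?_, ?_, ?_, ?_, ?_⟩
  · -- open
    apply IsOpen.inter isOpen_ball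
    have : {w : ℂ | ∀ k, (1 : ℂ) - (starRingEnd ℂ) (a k) * w ≠ 0}
        = ⋂ k, {w : ℂ | (1 : ℂ) - (starRingEnd ℂ) (a k) * w ≠ 0} := by
      ext w; simp
    rw [this]
    refine isOpen_iInter_of_finite fun k => ?_
    exact isOpen_compl_singleton.preimage (by fun_prop)
  · -- closedBall ⊆ U
    intro w hw
    rw [mem_closedBall_zero_iff] at hw
    constructor
    · rw [mem_ball_zero_iff]
      have : (0:ℝ) < t / 2 := by linarith
      simp only [hR_def]; linarith
    · exact fun k => hnum w hw k
  · -- differentiable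
    apply DifferentiableOn.fun_finsetProd
    intro k _
    apply DifferentiableOn.div (by fun_prop) (by fun_prop)
    intro w hw
    exact hden w (le_of_lt (mem_ball_zero_iff.mp hw.1)) k
  · -- nonvanishing
    intro z hz
    rw [Finset.prod_ne_zero_iff]
    intro k _
    exact div_ne_zero (hz.2 k) (hden z (le_of_lt (mem_ball_zero_iff.mp hz.1)) k)
  · -- φ 0 = 1
    simp
  · -- bound on circle
    intro z hz
    rw [norm_prod]
    have hfac : ∀ k : Fin n,
        ‖(1 - (starRingEnd ℂ) (a k) * z) / (1 - (ρ:ℂ) * (starRingEnd ℂ) (a k) * z)‖ ≤ 1 + t := by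
      intro k
      have hdk := hden z (hz.le.trans hR1) k
      have hdpos : 0 < ‖1 - (ρ:ℂ) * (starRingEnd ℂ) (a k) * z‖ := norm_pos_iff.mpr hdk
      rw [norm_div, div_le_iff₀ hdpos, norm_one_sub_conj_mul _ _ hz]
      have hkey := key_ineq ρ 1 hρ0 le_rfl (by nlinarith) (a k) z (ha k).le hz.le
      have h2 : 2 ≤ (1 + t) * (1 + ρ) := by
        simp only [hρ_def]
        nlinarith [mul_nonneg ht0.le (sub_nonneg.mpr ht1)]
      have h3 : (0:ℝ) < 1 + ρ := by linarith
      nlinarith [mul_le_mul_of_nonneg_right h2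
        (norm_nonneg (1 - (ρ:ℂ) * (starRingEnd ℂ) (a k) * z)), hkey,
        norm_nonneg (z - a k)]
    calc ∏ k, ‖(1 - (starRingEnd ℂ) (a k) * z) / (1 - (ρ:ℂ) * (starRingEnd ℂ) (a k) * z)‖
        ≤ ∏ _k : Fin n, (1 + t) :=
          Finset.prod_le_prod (fun k _ => norm_nonneg _) (fun k _ => hfac k)
      _ = (1 + t) ^ n := by rw [Finset.prod_const, Finset.card_univ, Fintype.card_fin]
      _ ≤ Real.exp t ^ n := pow_le_pow_left₀ (by linarith) (by linarith [Real.add_one_le_exp t]) n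
      _ = Real.exp ((n:ℝ) * t) := by rw [← Real.exp_nat_mul]
      _ = Real.exp 1 := by rw [ht_def]; congr 1; field_simp
  · -- the derivative bound
    intro z hz
    set r : ℝ := t / 2 with hr_def
    have hr0 : 0 < r := by simp only [hr_def]; linarith
    set f : ℂ → ℂ := fun w => ∏ k, (w - a k) / (1 - (ρ:ℂ) * (starRingEnd ℂ) (a k) * w) with hf_def
    -- the literal function agrees with f near z
    have hzV : ∀ k, (1 : ℂ) - (starRingEnd ℂ) (a k) * z ≠ 0 := hnum z hz.le
    have hVopen : IsOpen {w : ℂ | ∀ k, (1 : ℂ) - (starRingEnd ℂ) (a k) * w ≠ 0} := by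
      have : {w : ℂ | ∀ k, (1 : ℂ) - (starRingEnd ℂ) (a k) * w ≠ 0}
          = ⋂ k, {w : ℂ | (1 : ℂ) - (starRingEnd ℂ) (a k) * w ≠ 0} := by ext w; simp
      rw [this]
      exact isOpen_iInter_of_finite fun k => isOpen_compl_singleton.preimage (by fun_prop)
    have hE : (fun w : ℂ => (∏ k, (w - a k) / (1 - (starRingEnd ℂ) (a k) * w)) *
        ∏ k, (1 - (starRingEnd ℂ) (a k) * w) / (1 - (ρ:ℂ) * (starRingEnd ℂ) (a k) * w))
        =ᶠ[nhds z] f := by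
      filter_upwards [hVopen.mem_nhds hzV] with w hw
      rw [← Finset.prod_mul_distrib]
      apply Finset.prod_congr rfl
      intro k _
      rw [div_mul_div_comm, mul_comm (w - a k) (1 - (starRingEnd ℂ) (a k) * w),
        mul_div_mul_left _ _ (hw k)]
    rw [hE.iteratedDeriv_eq s]
    -- Cauchy estimate
    have hsubball : closedBall z r ⊆ closedBall (0:ℂ) R := by
      intro w hw
      rw [mem_closedBall_zero_iff]
      rw [mem_closedBall, dist_eq_norm] at hw
      calc ‖w‖ = ‖(w - z) + z‖ := by ring_nf
        _ ≤ ‖w - z‖ + ‖z‖ := norm_add_le _ _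
        _ ≤ r + 1 := by rw [hz]; linarith
        _ = R := by simp only [hr_def, hR_def]; ring
    have hwR : ∀ w ∈ closedBall z r, ‖w‖ ≤ R := fun w hw =>
      mem_closedBall_zero_iff.mp (hsubball hw)
    have hfdiff : DifferentiableOn ℂ f (closedBall z r) := by
      apply DifferentiableOn.fun_finsetProd
      intro k _
      apply DifferentiableOn.div (by fun_prop) (by fun_prop)
      intro w hw
      exact hden w (hwR w hw) k
    have hfM : ∀ w ∈ closedBall z r, ‖f w‖ ≤ Real.exp 2 := by
      intro w hw
      have hfw : f w = ∏ k, (w - a k) / (1 - (ρ:ℂ) * (starRingEnd ℂ) (a k) * w) := rfl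
      rw [hfw, norm_prod]
      have hfac : ∀ k : Fin n,
          ‖(w - a k) / (1 - (ρ:ℂ) * (starRingEnd ℂ) (a k) * w)‖ ≤ 1 + 2 * t := by
        intro k
        have hdk := hden w (hwR w hw) k
        have hdpos : 0 < ‖1 - (ρ:ℂ) * (starRingEnd ℂ) (a k) * w‖ := norm_pos_iff.mpr hdk
        rw [norm_div, div_le_iff₀ hdpos]
        have hkey := key_ineq ρ R hρ0 hR1 hρR2 (a k) w (ha k).le (hwR w hw)
        have h2 : 1 + R ≤ (1 + 2 * t) * (1 + ρ * R) := by
          simp only [hρ_def, hR_def, hr_def]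
          nlinarith [mul_nonneg ht0.le (sub_nonneg.mpr ht1), sq_nonneg t,
            mul_nonneg (mul_nonneg ht0.le ht0.le) ht0.le,
            mul_nonneg (mul_nonneg ht0.le ht0.le) (sub_nonneg.mpr ht1)]
        have h3 : (0:ℝ) < 1 + ρ * R := by nlinarith [mul_nonneg hρ0 (by linarith : (0:ℝ) ≤ R)]
        nlinarith [mul_le_mul_of_nonneg_right h2
          (norm_nonneg (1 - (ρ:ℂ) * (starRingEnd ℂ) (a k) * w)), hkey,
          norm_nonneg (w - a k)]
      calc ∏ k, ‖(w - a k) / (1 - (ρ:ℂ) * (starRingEnd ℂ) (a k) * w)‖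
          ≤ ∏ _k : Fin n, (1 + 2 * t) :=
            Finset.prod_le_prod (fun k _ => norm_nonneg _) (fun k _ => hfac k)
        _ = (1 + 2 * t) ^ n := by rw [Finset.prod_const, Finset.card_univ, Fintype.card_fin]
        _ ≤ Real.exp (2 * t) ^ n :=
            pow_le_pow_left₀ (by linarith) (by linarith [Real.add_one_le_exp (2 * t)]) n
        _ = Real.exp ((n:ℝ) * (2 * t)) := by rw [← Real.exp_nat_mul]
        _ = Real.exp 2 := by rw [ht_def]; congr 1; field_simp
    calc ‖iteratedDeriv s f z‖ ≤ s.factorial * Real.exp 2 / r ^ s :=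
        cauchy_bound hr0 hfdiff hfM s
      _ = (s.factorial : ℝ) * 2 ^ s * Real.exp 2 * (n:ℝ) ^ s := by
          rw [hr_def, ht_def]
          have h : (n:ℝ) ≠ 0 := hn0.ne'
          field_simp
          rw [← mul_pow, ← mul_pow, show (1:ℝ) / ((n:ℝ) * 2) * 2 * n = 1 by field_simp, one_pow]
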